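/- arXiv:2106.12998 — 2 statements merged into one kernel-verified Lean document; each statement's English description precedes it below -/
import Mathlib

section
/- Let V: ℝⁿ → [0,∞), β > 0, and for f: ℝⁿ → ℝ define ‖f‖_{1+βV} = sup_x |f(x)|/(1+βV(x)) and the Lipschitz seminorm |||f|||_β = sup_{x≠y} |f(x)−f(y)|/d_β(x,y) where d_β(x,y) = 2 + βV(x) + βV(y) for x ≠ y. Then for every f with |||f|||_β < ∞, one has |||f|||_β = inf_{c∈ℝ} ‖f + c‖_{1+βV}. -/
/-!
For a positive weight `w`, the Lipschitz seminorm for the distance `w x + w y` is the best constant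
`ℓ` with `|f x - f y| ≤ ℓ (w x + w y)`, and `‖f + c‖_w` is the best `ℓ` with `|f x + c| ≤ ℓ w x`.
The triangle inequality through `f + c` gives one inequality. Conversely, the Lipschitz bound
`f y - f x ≤ ℓ (w x + w y)` says exactly that `sup_x (-f x - ℓ w x) ≤ inf_y (ℓ w y - f y)`, and any
constant `c` between these two numbers satisfies `|f x + c| ≤ ℓ w x` for all `x`.
-/

open scoped ENNReal

/-- The weighted supremum norm `‖f‖_{1+βV}` (with values in `ℝ≥0∞`). -/
noncomputable def weightedNorm {n : ℕ} (V : (Fin n → ℝ) → ℝ) (β : ℝ)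
    (f : (Fin n → ℝ) → ℝ) : ℝ≥0∞ :=
  ⨆ x, ENNReal.ofReal (|f x| / (1 + β * V x))

/-- The Lipschitz seminorm associated with the metric
`d_β(x,y) = 2 + βV(x) + βV(y)` for `x ≠ y`. -/
noncomputable def lipSeminorm {n : ℕ} (V : (Fin n → ℝ) → ℝ) (β : ℝ)
    (f : (Fin n → ℝ) → ℝ) : ℝ≥0∞ :=
  ⨆ x, ⨆ y, ⨆ _ : x ≠ y, ENNReal.ofReal (|f x - f y| / (2 + β * V x + β * V y))

namespace ENNReal

theorem le_of_forall_le_ofReal {a b : ℝ≥0∞}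
    (h : ∀ ℓ : ℝ, 0 ≤ ℓ → b ≤ ENNReal.ofReal ℓ → a ≤ ENNReal.ofReal ℓ) : a ≤ b := by
  rcases eq_or_ne b ⊤ with rfl | hb
  · exact le_top
  · simpa only [ofReal_toReal hb] using h b.toReal toReal_nonneg (ofReal_toReal hb).ge

theorem ofReal_div_le_ofReal_iff {a b ℓ : ℝ} (hb : 0 < b) (hℓ : 0 ≤ ℓ) :
    ENNReal.ofReal (a / b) ≤ ENNReal.ofReal ℓ ↔ a ≤ ℓ * b := by
  rw [ofReal_le_ofReal_iff hℓ, div_le_iff₀ hb]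

end ENNReal

theorem exists_forall_le_and_le_of_forall_le {α : Type*} {g h : α → ℝ} (H : ∀ x y, g x ≤ h y) :
    ∃ c, ∀ x, g x ≤ c ∧ c ≤ h x := by
  rcases isEmpty_or_nonempty α with hα | hα
  · exact ⟨0, fun x => isEmptyElim x⟩
  · have hbdd : BddAbove (Set.range g) := ⟨h hα.some, Set.forall_mem_range.2 fun x => H x _⟩
    exact ⟨⨆ x, g x, fun x => ⟨le_ciSup hbdd x, ciSup_le fun y => H y x⟩⟩

section WeightedNorms

variable {α : Type*} (w : α → ℝ)

noncomputable def weightedSupNorm (f : α → ℝ) : ℝ≥0∞ :=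
  ⨆ x, ENNReal.ofReal (|f x| / w x)

noncomputable def weightedLipNorm (f : α → ℝ) : ℝ≥0∞ :=
  ⨆ x, ⨆ y, ⨆ _ : x ≠ y, ENNReal.ofReal (|f x - f y| / (w x + w y))

variable {w} (hw : ∀ x, 0 < w x) {f : α → ℝ} {ℓ : ℝ}
include hw

theorem weightedSupNorm_le_ofReal_iff (hℓ : 0 ≤ ℓ) :
    weightedSupNorm w f ≤ ENNReal.ofReal ℓ ↔ ∀ x, |f x| ≤ ℓ * w x := by
  simp only [weightedSupNorm, iSup_le_iff, ENNReal.ofReal_div_le_ofReal_iff (hw _) hℓ]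

theorem weightedLipNorm_le_ofReal_iff (hℓ : 0 ≤ ℓ) :
    weightedLipNorm w f ≤ ENNReal.ofReal ℓ ↔ ∀ x y, |f x - f y| ≤ ℓ * (w x + w y) := by
  simp only [weightedLipNorm, iSup_le_iff,
    ENNReal.ofReal_div_le_ofReal_iff (add_pos (hw _) (hw _)) hℓ]
  refine ⟨fun H x y => ?_, fun H x y _ => H x y⟩
  rcases eq_or_ne x y with rfl | hxy
  · simpa using mul_nonneg hℓ (add_pos (hw x) (hw x)).le
  · exact H x y hxy

theorem weightedLipNorm_le_weightedSupNorm_add_const (c : ℝ) :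
    weightedLipNorm w f ≤ weightedSupNorm w (fun x => f x + c) := by
  refine ENNReal.le_of_forall_le_ofReal fun ℓ hℓ hsup => ?_
  rw [weightedSupNorm_le_ofReal_iff hw hℓ] at hsup
  refine (weightedLipNorm_le_ofReal_iff hw hℓ).2 fun x y => ?_
  calc |f x - f y| = |(f x + c) - (f y + c)| := by ring_nf
    _ ≤ |f x + c| + |f y + c| := abs_sub _ _
    _ ≤ ℓ * w x + ℓ * w y := add_le_add (hsup x) (hsup y)
    _ = ℓ * (w x + w y) := by ring

theorem exists_weightedSupNorm_add_const_le_weightedLipNorm :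
    ∃ c : ℝ, weightedSupNorm w (fun x => f x + c) ≤ weightedLipNorm w f := by
  rcases eq_or_ne (weightedLipNorm w f) ⊤ with htop | hfin
  · exact ⟨0, htop ▸ le_top⟩
  set ℓ := (weightedLipNorm w f).toReal
  have hℓ : 0 ≤ ℓ := ENNReal.toReal_nonneg
  have hlip := (weightedLipNorm_le_ofReal_iff hw hℓ).1 (ENNReal.ofReal_toReal hfin).ge
  obtain ⟨c, hc⟩ : ∃ c, ∀ x, -f x - ℓ * w x ≤ c ∧ c ≤ ℓ * w x - f x :=
    exists_forall_le_and_le_of_forall_le fun x y => by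
      linarith [(abs_le.1 (hlip y x)).2]
  refine ⟨c, ?_⟩
  rw [← ENNReal.ofReal_toReal hfin, weightedSupNorm_le_ofReal_iff hw hℓ]
  exact fun x => abs_le.2 ⟨by linarith [(hc x).1], by linarith [(hc x).2]⟩

theorem weightedLipNorm_eq_iInf_weightedSupNorm_add_const :
    weightedLipNorm w f = ⨅ c : ℝ, weightedSupNorm w (fun x => f x + c) := by
  obtain ⟨c, hc⟩ := exists_weightedSupNorm_add_const_le_weightedLipNorm hw (f := f)
  exact le_antisymm (le_iInf (weightedLipNorm_le_weightedSupNorm_add_const hw))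
    (iInf_le_of_le c hc)

end WeightedNorms

theorem stmt12_general {n : ℕ} (V : (Fin n → ℝ) → ℝ) (hV : ∀ x, 0 ≤ V x) (β : ℝ) (hβ : 0 < β)
    (f : (Fin n → ℝ) → ℝ) :
    lipSeminorm V β f = ⨅ c : ℝ, weightedNorm V β (fun x => f x + c) := by
  have hw : ∀ x, 0 < 1 + β * V x := fun x => by have := hV x; positivity
  have hlip : lipSeminorm V β f = weightedLipNorm (fun x => 1 + β * V x) f := by
    simp only [lipSeminorm, weightedLipNorm]
    ring_nf
  rw [hlip]
  exact weightedLipNorm_eq_iInf_weightedSupNorm_add_const hw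

theorem stmt12 {n : ℕ} (V : (Fin n → ℝ) → ℝ) (hV : ∀ x, 0 ≤ V x) (β : ℝ) (hβ : 0 < β)
    (f : (Fin n → ℝ) → ℝ) (hfin : lipSeminorm V β f ≠ ⊤) :
    lipSeminorm V β f = ⨅ c : ℝ, weightedNorm V β (fun x => f x + c) :=
  stmt12_general V hV β hβ f
end

section
/- Let P be a 2×2 matrix with strictly positive entries a, b, c, d. In the Hilbert projective metric θ(f,g) = |log(f₂g₁/(f₁g₂))| on the open positive quadrant, the Lipschitz constant of the projective action of P equals tanh(Δ/4), where Δ = |log(ad/(bc))|. -/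
/-- Hilbert's projective metric on the open positive quadrant of `ℝ²`. -/
noncomputable def hilbertTheta (f g : ℝ × ℝ) : ℝ :=
  |Real.log ((f.2 * g.1) / (f.1 * g.2))|

/-! In the coordinate `x = log (f₂ / f₁)` the metric becomes `|x - y|` and `P` acts by
`x ↦ log ((c + d eˣ) / (a + b eˣ))`, so the supremum is that of the absolute derivative
`(ad - bc) u / ((c + d u) (a + b u))`, `u = eˣ`. The identity
`(c + d u) (a + b u) = (√ad + √bc)² u + (√ac - √bd u)²` bounds it by
`|√ad - √bc| / (√ad + √bc) = tanh (Δ / 4)`, with equality at `u = √ac / √bd`. -/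

open Real Filter Topology

theorem tanh_eq_exp_two_mul (x : ℝ) : tanh x = (exp (2 * x) - 1) / (exp (2 * x) + 1) := by
  rw [tanh_eq, exp_neg, two_mul, exp_add]
  field_simp

theorem tanh_log_div_two {r : ℝ} (hr : 0 < r) : tanh (log r / 2) = (r - 1) / (r + 1) := by
  rw [tanh_eq_exp_two_mul, mul_div_cancel₀ _ two_ne_zero, exp_log hr]

theorem tanh_abs_log_div_two {r : ℝ} (hr : 0 < r) :
    tanh (|log r| / 2) = |r - 1| / (r + 1) := by
  rcases le_total 1 r with h | h
  · rw [abs_of_nonneg (log_nonneg h), abs_of_nonneg (by linarith), tanh_log_div_two hr]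
  · rw [abs_of_nonpos (log_nonpos hr.le h), abs_of_nonpos (by linarith), ← log_inv,
      tanh_log_div_two (inv_pos.2 hr)]
    field_simp
    ring

theorem tanh_abs_log_div_four {p q : ℝ} (hp : 0 < p) (hq : 0 < q) :
    tanh (|log (p / q)| / 4) = |√p - √q| / (√p + √q) := by
  have hsq := sqrt_pos.2 hq
  have hlog : log (p / q) = 2 * log (√p / √q) := by
    rw [← sqrt_div' _ hq.le, log_sqrt (by positivity)]; ring
  rw [hlog, abs_mul, abs_two, show 2 * |log (√p / √q)| / 4 = |log (√p / √q)| / 2 by ring,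
    tanh_abs_log_div_two (by positivity), div_sub_one hsq.ne', div_add_one hsq.ne', abs_div,
    abs_of_pos hsq, div_div_div_cancel_right₀ hsq.ne']

theorem csSup_abs_sub_div_eq_of_hasDerivAt {f f' : ℝ → ℝ} {K x₀ : ℝ}
    (hf : ∀ x, HasDerivAt f (f' x) x) (hf'K : ∀ x, |f' x| ≤ K) (hx₀ : |f' x₀| = K) :
    sSup {r | ∃ x y, x ≠ y ∧ r = |f x - f y| / |x - y|} = K := by
  refine IsLUB.csSup_eq ⟨?_, fun M hM => ?_⟩ ⟨_, 0, 1, zero_ne_one, rfl⟩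
  · rintro r ⟨x, y, hxy, rfl⟩
    rw [div_le_iff₀ (abs_pos.2 (sub_ne_zero.2 hxy))]
    simpa only [Real.norm_eq_abs] using Convex.norm_image_sub_le_of_norm_hasDerivWithin_le
      (fun z _ => (hf z).hasDerivWithinAt) (fun z _ => hf'K z) convex_univ
      (Set.mem_univ y) (Set.mem_univ x)
  · have hslope : Tendsto (fun y => |slope f x₀ y|) (𝓝[≠] x₀) (𝓝 K) :=
      hx₀ ▸ (hasDerivAt_iff_tendsto_slope.1 (hf x₀)).abs
    refine le_of_tendsto hslope ?_
    filter_upwards [self_mem_nhdsWithin] with y hy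
    refine hM ⟨y, x₀, hy, ?_⟩
    rw [slope_def_field, abs_div]

noncomputable def logRatio (f : ℝ × ℝ) : ℝ := log (f.2 / f.1)

theorem hilbertTheta_eq_abs_sub_logRatio {f g : ℝ × ℝ} (hf₁ : f.1 ≠ 0) (hf₂ : f.2 ≠ 0)
    (hg₁ : g.1 ≠ 0) (hg₂ : g.2 ≠ 0) : hilbertTheta f g = |logRatio f - logRatio g| := by
  rw [hilbertTheta, logRatio, logRatio, ← log_div (by positivity) (by positivity)]
  field_simp

theorem logRatio_one_exp (x : ℝ) : logRatio (1, exp x) = x := by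
  simp [logRatio]

noncomputable def logAction (a b c d x : ℝ) : ℝ := log ((c + d * exp x) / (a + b * exp x))

noncomputable def logActionDeriv (a b c d u : ℝ) : ℝ :=
  (a * d - b * c) * u / ((c + d * u) * (a + b * u))

section
variable {a b c d : ℝ}

theorem logRatio_map_eq_logAction {f : ℝ × ℝ} (hf₁ : 0 < f.1) (hf₂ : 0 < f.2) :
    logRatio (a * f.1 + b * f.2, c * f.1 + d * f.2) = logAction a b c d (logRatio f) := by
  rw [logRatio, logAction, logRatio, exp_log (by positivity)]
  congr 1
  field_simp

theorem mul_add_mul_eq_sq_mul_add_sq (ha : 0 ≤ a) (hb : 0 ≤ b) (hc : 0 ≤ c) (hd : 0 ≤ d)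
    (u : ℝ) :
    (c + d * u) * (a + b * u) =
      (√(a * d) + √(b * c)) ^ 2 * u + (√(a * c) - √(b * d) * u) ^ 2 := by
  have hst : √(a * d) * √(b * c) = √(a * c) * √(b * d) := by
    rw [← sqrt_mul (mul_nonneg ha hd), ← sqrt_mul (mul_nonneg ha hc)]; ring_nf
  linear_combination -u * sq_sqrt (mul_nonneg ha hd) - u * sq_sqrt (mul_nonneg hb hc)
    - sq_sqrt (mul_nonneg ha hc) - u ^ 2 * sq_sqrt (mul_nonneg hb hd) - 2 * u * hst

theorem abs_mul_sub_mul (ha : 0 ≤ a) (hb : 0 ≤ b) (hc : 0 ≤ c) (hd : 0 ≤ d) :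
    |a * d - b * c| = |√(a * d) - √(b * c)| * (√(a * d) + √(b * c)) := by
  rw [← abs_of_nonneg (by positivity : 0 ≤ √(a * d) + √(b * c)), ← abs_mul]
  congr 1
  linear_combination -sq_sqrt (mul_nonneg ha hd) + sq_sqrt (mul_nonneg hb hc)

variable (ha : 0 < a) (hb : 0 < b) (hc : 0 < c) (hd : 0 < d)
include ha hb hc hd

theorem hasDerivAt_logAction (x : ℝ) :
    HasDerivAt (logAction a b c d) (logActionDeriv a b c d (exp x)) x := by
  have hnum : 0 < c + d * exp x := by positivity
  have hden : 0 < a + b * exp x := by positivity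
  have := ((((hasDerivAt_exp x).const_mul d).const_add c).div
    (((hasDerivAt_exp x).const_mul b).const_add a) hden.ne').log (div_pos hnum hden).ne'
  refine this.congr_deriv ?_
  simp only [Pi.div_apply, logActionDeriv]
  field_simp
  ring

theorem abs_logActionDeriv {u : ℝ} (hu : 0 < u) :
    |logActionDeriv a b c d u| =
      |√(a * d) - √(b * c)| * (√(a * d) + √(b * c)) * u /
        ((√(a * d) + √(b * c)) ^ 2 * u + (√(a * c) - √(b * d) * u) ^ 2) := by
  rw [logActionDeriv, abs_div, abs_mul, abs_of_pos hu,
    abs_of_pos (by positivity : 0 < (c + d * u) * (a + b * u)),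
    abs_mul_sub_mul ha.le hb.le hc.le hd.le, mul_add_mul_eq_sq_mul_add_sq ha.le hb.le hc.le hd.le]

theorem abs_logActionDeriv_le {u : ℝ} (hu : 0 < u) :
    |logActionDeriv a b c d u| ≤ |√(a * d) - √(b * c)| / (√(a * d) + √(b * c)) := by
  have hst : 0 < √(a * d) + √(b * c) := by positivity
  calc |logActionDeriv a b c d u|
      = |√(a * d) - √(b * c)| * (√(a * d) + √(b * c)) * u /
          ((√(a * d) + √(b * c)) ^ 2 * u + (√(a * c) - √(b * d) * u) ^ 2) :=
        abs_logActionDeriv ha hb hc hd hu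
    _ ≤ |√(a * d) - √(b * c)| * (√(a * d) + √(b * c)) * u / ((√(a * d) + √(b * c)) ^ 2 * u) :=
        div_le_div_of_nonneg_left (by positivity) (by positivity)
          (le_add_of_nonneg_right (sq_nonneg _))
    _ = |√(a * d) - √(b * c)| / (√(a * d) + √(b * c)) := by field_simp

theorem abs_logActionDeriv_sqrt_div_sqrt :
    |logActionDeriv a b c d (√(a * c) / √(b * d))| =
      |√(a * d) - √(b * c)| / (√(a * d) + √(b * c)) := by
  have hbd : 0 < √(b * d) := by positivity
  rw [abs_logActionDeriv ha hb hc hd (by positivity), mul_div_cancel₀ _ hbd.ne', sub_self,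
    zero_pow two_ne_zero, add_zero]
  have hst : 0 < √(a * d) + √(b * c) := by positivity
  field_simp

end

theorem setOf_hilbertTheta_ratio_eq {a b c d : ℝ} (ha : 0 < a) (hb : 0 < b) (hc : 0 < c)
    (hd : 0 < d) :
    {r : ℝ | ∃ f g : ℝ × ℝ,
        0 < f.1 ∧ 0 < f.2 ∧ 0 < g.1 ∧ 0 < g.2 ∧ hilbertTheta f g ≠ 0 ∧
        r = hilbertTheta (a * f.1 + b * f.2, c * f.1 + d * f.2)
              (a * g.1 + b * g.2, c * g.1 + d * g.2) / hilbertTheta f g} =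
      {r | ∃ x y : ℝ, x ≠ y ∧ r = |logAction a b c d x - logAction a b c d y| / |x - y|} := by
  ext r
  constructor
  · rintro ⟨f, g, hf₁, hf₂, hg₁, hg₂, hθ, rfl⟩
    rw [hilbertTheta_eq_abs_sub_logRatio hf₁.ne' hf₂.ne' hg₁.ne' hg₂.ne'] at hθ ⊢
    rw [hilbertTheta_eq_abs_sub_logRatio (by positivity) (by positivity) (by positivity)
      (by positivity), logRatio_map_eq_logAction hf₁ hf₂, logRatio_map_eq_logAction hg₁ hg₂]
    exact ⟨logRatio f, logRatio g, fun h => hθ (by rw [h, sub_self, abs_zero]), rfl⟩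
  · rintro ⟨x, y, hxy, rfl⟩
    have hθ (x y : ℝ) : hilbertTheta (1, exp x) (1, exp y) = |x - y| := by
      rw [hilbertTheta_eq_abs_sub_logRatio one_ne_zero (exp_pos x).ne' one_ne_zero
        (exp_pos y).ne', logRatio_one_exp, logRatio_one_exp]
    refine ⟨(1, exp x), (1, exp y), one_pos, exp_pos x, one_pos, exp_pos y, ?_, ?_⟩
    · rwa [hθ, abs_ne_zero, sub_ne_zero]
    · rw [hθ, hilbertTheta_eq_abs_sub_logRatio (by positivity) (by positivity) (by positivity)
        (by positivity), logRatio_map_eq_logAction (f := (1, exp x)) one_pos (exp_pos x),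
        logRatio_map_eq_logAction (f := (1, exp y)) one_pos (exp_pos y), logRatio_one_exp,
        logRatio_one_exp]

theorem stmt15 (a b c d : ℝ) (ha : 0 < a) (hb : 0 < b) (hc : 0 < c) (hd : 0 < d) :
    sSup {r : ℝ | ∃ f g : ℝ × ℝ,
        0 < f.1 ∧ 0 < f.2 ∧ 0 < g.1 ∧ 0 < g.2 ∧ hilbertTheta f g ≠ 0 ∧
        r = hilbertTheta (a * f.1 + b * f.2, c * f.1 + d * f.2)
              (a * g.1 + b * g.2, c * g.1 + d * g.2) / hilbertTheta f g}
      = Real.tanh (|Real.log ((a * d) / (b * c))| / 4) := by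
  rw [setOf_hilbertTheta_ratio_eq ha hb hc hd, tanh_abs_log_div_four (mul_pos ha hd) (mul_pos hb hc)]
  refine csSup_abs_sub_div_eq_of_hasDerivAt (hasDerivAt_logAction ha hb hc hd)
    (fun x => abs_logActionDeriv_le ha hb hc hd (exp_pos x))
    (x₀ := log (√(a * c) / √(b * d))) ?_
  rw [exp_log (by positivity)]
  exact abs_logActionDeriv_sqrt_div_sqrt ha hb hc hd
end
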